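/- arXiv:0812.4743 — 5 statements merged into one kernel-verified Lean document; each statement's English description precedes it below -/
import Mathlib

section
/- On an almost contact Norden metric vector space, the tensor π₁ - π₂ - π₄ satisfies the Kähler condition L(x,y,z,u) = -L(x,y,φz,φu) for all x,y,z,u. -/
def pi1 {V : Type*} (g : V → V → ℝ) (x y z u : V) : ℝ :=
  g y z * g x u - g x z * g y u
def pi2 {V : Type*} (g : V → V → ℝ) (φ : V → V) (x y z u : V) : ℝ :=
  g y (φ z) * g x (φ u) - g x (φ z) * g y (φ u)
def pi4 {V : Type*} (g : V → V → ℝ) (η : V → ℝ) (x y z u : V) : ℝ :=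
  η y * η z * g x u - η x * η z * g y u + η x * η u * g y z - η y * η u * g x z

/-- π₁ - π₂ - π₄ is Kählerian: L(x,y,z,u) = -L(x,y,φz,φu). -/
theorem stmt_11 {V : Type*} [AddCommGroup V] [Module ℝ V]
    (φ : V →ₗ[ℝ] V) (ξ : V) (η : V →ₗ[ℝ] ℝ) (g : V →ₗ[ℝ] V →ₗ[ℝ] ℝ)
    (hφ : ∀ X, φ (φ X) = -X + η X • ξ)
    (hηξ : η ξ = 1)
    (hsym : ∀ X Y, g X Y = g Y X)
    (hg : ∀ X Y, g (φ X) (φ Y) = -g X Y + η X * η Y)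
    (hgφ : ∀ X Y, g (φ X) Y = g X (φ Y))
    (hηg : ∀ X, η X = g X ξ) :
    ∀ x y z u,
      (pi1 (fun a b => g a b) x y z u - pi2 (fun a b => g a b) (fun a => φ a) x y z u
        - pi4 (fun a b => g a b) (fun a => η a) x y z u)
      = -(pi1 (fun a b => g a b) x y (φ z) (φ u)
        - pi2 (fun a b => g a b) (fun a => φ a) x y (φ z) (φ u)
        - pi4 (fun a b => g a b) (fun a => η a) x y (φ z) (φ u)) := by
  have hA : ∀ a b, g a (φ (φ b)) = -(g a b) + η b * η a := by
    intro a b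
    rw [hφ]
    simp [map_add, map_neg, map_smul, ← hηg, smul_eq_mul]
  have h0 : ∀ X, g (φ X) (φ ξ) = 0 := by
    intro X
    rw [hg, ← hηg, hηξ]
    ring
  have h1 : ∀ X, g X (φ ξ) = η X * g ξ (φ ξ) := by
    intro X
    have := h0 (φ X)
    rw [hφ] at this
    simp [map_add, map_neg, map_smul, smul_eq_mul] at this
    linarith
  have hc : g ξ (φ ξ) = 0 := by
    have h2 : g (φ ξ) (φ ξ) = 0 := h0 ξ
    have h3 : g (φ ξ) (φ ξ) = η (φ ξ) * g ξ (φ ξ) := h1 (φ ξ)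
    have h4 : η (φ ξ) = g ξ (φ ξ) := by rw [hηg, hsym]
    rw [h2, h4] at h3
    exact (mul_self_eq_zero.mp h3.symm)
  have hηφ : ∀ X, η (φ X) = 0 := by
    intro X
    rw [hηg, hsym, ← hgφ, hsym, h1, hc, mul_zero]
  intro x y z u
  simp only [pi1, pi2, pi4, hA, hηφ]
  ring
end

section
/- On an almost contact Norden metric vector space, the tensor π₃ + π₅ satisfies the Kähler condition L(x,y,z,u) = -L(x,y,φz,φu) for all x,y,z,u. -/
def pi3 {V : Type*} (g : V → V → ℝ) (φ : V → V) (x y z u : V) : ℝ :=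
  -(g y z * g x (φ u)) + g x z * g y (φ u) - g y (φ z) * g x u + g x (φ z) * g y u
def pi5 {V : Type*} (g : V → V → ℝ) (φ : V → V) (η : V → ℝ) (x y z u : V) : ℝ :=
  η y * η z * g x (φ u) - η x * η z * g y (φ u) + η x * η u * g y (φ z) - η y * η u * g x (φ z)

/-- π₃ + π₅ is Kählerian: L(x,y,z,u) = -L(x,y,φz,φu). -/
theorem stmt_12 {V : Type*} [AddCommGroup V] [Module ℝ V]
    (φ : V →ₗ[ℝ] V) (ξ : V) (η : V →ₗ[ℝ] ℝ) (g : V →ₗ[ℝ] V →ₗ[ℝ] ℝ)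
    (hφ : ∀ X, φ (φ X) = -X + η X • ξ)
    (hηξ : η ξ = 1)
    (hsym : ∀ X Y, g X Y = g Y X)
    (hg : ∀ X Y, g (φ X) (φ Y) = -g X Y + η X * η Y)
    (hgφ : ∀ X Y, g (φ X) Y = g X (φ Y))
    (hηg : ∀ X, η X = g X ξ) :
    ∀ x y z u,
      (pi3 (fun a b => g a b) (fun a => φ a) x y z u
        + pi5 (fun a b => g a b) (fun a => φ a) (fun a => η a) x y z u)
      = -(pi3 (fun a b => g a b) (fun a => φ a) x y (φ z) (φ u)
        + pi5 (fun a b => g a b) (fun a => φ a) (fun a => η a) x y (φ z) (φ u)) := by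
  have hgξ : ∀ a, g a ξ = η a := fun a => (hηg a).symm
  have hφφξ : φ (φ ξ) = 0 := by rw [hφ, hηξ, one_smul]; abel
  have hφξeq : φ ξ = η (φ ξ) • ξ := by
    have h := hφ (φ ξ)
    rw [hφφξ, map_zero] at h
    have : (0:V) + φ ξ = -φ ξ + η (φ ξ) • ξ + φ ξ := by rw [← h]
    simpa using this
  have hηφξ : η (φ ξ) = 0 := by
    have h0 : g (φ ξ) (φ ξ) = 0 := by rw [hg, hgξ, hηξ]; ring
    rw [hφξeq] at h0
    simp only [map_smul, LinearMap.smul_apply, smul_eq_mul, hgξ, hηξ] at h0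
    nlinarith [h0]
  have hφξ : φ ξ = 0 := by rw [hφξeq, hηφξ, zero_smul]
  have hηφ : ∀ a, η (φ a) = 0 := by
    intro a
    rw [hηg, hgφ, hφξ, map_zero]
  have key : ∀ a b, g a (φ (φ b)) = -(g a b) + η b * η a := by
    intro a b
    rw [hφ]
    simp [map_add, map_neg, map_smul, hgξ]
  intro x y z u
  simp only [pi3, pi5, key, hηφ]
  ring
end

section
/- On a real time-like hypersurface structure, for X, Y ∈ M the induced metric satisfies g'(X, JY) = g(X, φY) + tan t · η(X)η(Y), and consequently the restricted curvature-like tensors satisfy π₁' = π₁, π₂' = π₂ + tan t · π₅, and π₃' = π₃ - tan t · π₄ on M. -/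
open Real

/-- on a real time-like hypersurface, g'(X,JY) = g(X,φY) + tan t·η(X)η(Y),
and hence π₁' = π₁, π₂' = π₂ + tan t·π₅, π₃' = π₃ - tan t·π₄ on M. -/
theorem stmt_15 {V' : Type*} [AddCommGroup V'] [Module ℝ V']
    (J : V' →ₗ[ℝ] V') (g' : V' →ₗ[ℝ] V' →ₗ[ℝ] ℝ)
    (hJ : ∀ X, J (J X) = -X)
    (hsym : ∀ X Y, g' X Y = g' Y X)
    (hNorden : ∀ X Y, g' (J X) (J Y) = -g' X Y)
    (N : V') (hN : g' N N = -1)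
    (t : ℝ) (ht : t = arctan (g' N (J N)))
    (ξ : V') (hξ : ξ = sin t • N + cos t • J N)
    (η : V' → ℝ) (hη : ∀ X, η X = cos t * g' X (J N))
    (φ : V' → V')
    (hφ : ∀ X, φ X = J X + (cos t * g' X (J N)) • (cos t • N - sin t • J N)) :
    (∀ X Y, g' X N = 0 → g' Y N = 0 →
      g' X (J Y) = g' X (φ Y) + tan t * (η X * η Y)) ∧
    (∀ x y z u, g' x N = 0 → g' y N = 0 → g' z N = 0 → g' u N = 0 →
      (pi1 (fun a b => g' a b) x y z u = pi1 (fun a b => g' a b) x y z u) ∧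
      (pi2 (fun a b => g' a b) (fun a => J a) x y z u
        = pi2 (fun a b => g' a b) φ x y z u
          + tan t * pi5 (fun a b => g' a b) φ η x y z u) ∧
      (pi3 (fun a b => g' a b) (fun a => J a) x y z u
        = pi3 (fun a b => g' a b) φ x y z u
          - tan t * pi4 (fun a b => g' a b) η x y z u)) := by
  have hc : Real.cos t ≠ 0 := by
    rw [ht]; exact (Real.cos_arctan_pos _).ne'
  have htan : Real.tan t * Real.cos t = Real.sin t := by
    rw [Real.tan_eq_sin_div_cos]; field_simp
  have key : ∀ X Y, g' X N = 0 → g' Y N = 0 →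
      g' X (J Y) = g' X (φ Y) + Real.tan t * (η X * η Y) := by
    intro X Y hX hY
    rw [hφ, hη, hη]
    simp only [map_add, map_smul, map_sub, smul_eq_mul, hX]
    linear_combination (-Real.cos t * g' X (J N) * g' Y (J N)) * htan
  refine ⟨key, fun x y z u hx hy hz hu => ⟨rfl, ?_, ?_⟩⟩
  · simp only [pi2, pi5]
    rw [key y z hy hz, key x u hx hu, key x z hx hz, key y u hy hu]
    ring
  · simp only [pi3, pi4]
    rw [key x u hx hu, key y u hy hu, key y z hy hz, key x z hx hz]
    ring
end

section
/- For a totally real section span{x,y} ⊂ M orthogonal to ξ (i.e. η(x) = η(y) = 0, g(x,φx) = g(y,φy) = g(x,φy) = 0) that is nondegenerate, the induced sectional curvature of R = ν'[π₁ - π₂ - tan t·π₅] + ν̃'[π₃ - tan t·π₄] - π₁(A·, A·, ·, ·) satisfies k(x,y) = R(x,y,y,x)/π₁(x,y,y,x) = ν' - π₁(Ax,Ay,y,x)/π₁(x,y,y,x). -/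
/-!
On a totally real section orthogonal to `ξ` every term of `R(x,y,y,x)` except
`ν' π₁(x,y,y,x) - π₁(Ax,Ay,y,x)` vanishes: `π₄` and `π₅` carry a factor `η x` or `η y`,
and each product in `π₂` and `π₃` contains one of `g(x,φx)`, `g(y,φy)`, `g(x,φy)`, `g(y,φx)`.
The last one vanishes with the third, because on `ker η` the Norden condition
`g(φX,φY) = -g(X,Y) + η(X)η(Y)` together with `φ² = -1 + η ⊗ ξ` makes `φ` symmetric for `g`.
-/

open Real

section Vanishing

variable {V : Type*} (g : V → V → ℝ) (φ : V → V) (η : V → ℝ) {x y : V}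

theorem pi2_self_eq_zero (hxx : g x (φ x) = 0) (hxy : g x (φ y) = 0) :
    pi2 g φ x y y x = 0 := by
  simp only [pi2, hxx, hxy, mul_zero, zero_mul, sub_zero]

theorem pi3_self_eq_zero (hxx : g x (φ x) = 0) (hyy : g y (φ y) = 0)
    (hxy : g x (φ y) = 0) (hyx : g y (φ x) = 0) :
    pi3 g φ x y y x = 0 := by
  simp only [pi3, hxx, hyy, hxy, hyx, mul_zero, zero_mul, neg_zero, add_zero, sub_zero]

theorem pi4_self_eq_zero (hηx : η x = 0) (hηy : η y = 0) : pi4 g η x y y x = 0 := by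
  simp only [pi4, hηx, hηy, mul_zero, zero_mul, sub_zero, add_zero]

theorem pi5_self_eq_zero (hηx : η x = 0) (hηy : η y = 0) : pi5 g φ η x y y x = 0 := by
  simp only [pi5, hηx, hηy, mul_zero, zero_mul, sub_zero, add_zero]

end Vanishing

theorem apply_phi_comm_of_eta_eq_zero {V : Type*} [AddCommGroup V]
    [Module ℝ V] (φ : V →ₗ[ℝ] V) (ξ : V) (η : V →ₗ[ℝ] ℝ) (g : V →ₗ[ℝ] V →ₗ[ℝ] ℝ)
    (hφ : ∀ X, φ (φ X) = -X + η X • ξ) (hg : ∀ X Y, g (φ X) (φ Y) = -g X Y + η X * η Y)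
    {x y : V} (hηx : η x = 0) (hηy : η y = 0) :
    g (φ x) y = g x (φ y) := by
  have h := hg (φ x) y
  rw [hφ x, hηx, hηy, zero_smul, add_zero, mul_zero, add_zero, map_neg,
    LinearMap.neg_apply] at h
  linarith

theorem stmt_17_general {V : Type*} [AddCommGroup V] [Module ℝ V]
    (φ : V →ₗ[ℝ] V) (ξ : V) (η : V →ₗ[ℝ] ℝ) (g : V →ₗ[ℝ] V →ₗ[ℝ] ℝ)
    (hφ : ∀ X, φ (φ X) = -X + η X • ξ)
    (hsym : ∀ X Y, g X Y = g Y X)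
    (hg : ∀ X Y, g (φ X) (φ Y) = -g X Y + η X * η Y)
    (A : V →ₗ[ℝ] V)
    (t ν' νt : ℝ)
    (R : V → V → V → V → ℝ)
    (hR : ∀ x y z u, R x y z u
      = ν' * (pi1 (fun a b => g a b) x y z u
            - pi2 (fun a b => g a b) (fun a => φ a) x y z u
            - tan t * pi5 (fun a b => g a b) (fun a => φ a) (fun a => η a) x y z u)
      + νt * (pi3 (fun a b => g a b) (fun a => φ a) x y z u
            - tan t * pi4 (fun a b => g a b) (fun a => η a) x y z u)
      - pi1 (fun a b => g a b) (A x) (A y) z u)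
    (x y : V)
    (hηx : η x = 0) (hηy : η y = 0)
    (hxx : g x (φ x) = 0) (hyy : g y (φ y) = 0) (hxy : g x (φ y) = 0)
    (hnd : pi1 (fun a b => g a b) x y y x ≠ 0) :
    R x y y x / pi1 (fun a b => g a b) x y y x
      = ν' - pi1 (fun a b => g a b) (A x) (A y) y x
              / pi1 (fun a b => g a b) x y y x := by
  have hyx : g y (φ x) = 0 := by
    rw [hsym, apply_phi_comm_of_eta_eq_zero φ ξ η g hφ hg hηx hηy, hxy]
  have hRxy : R x y y x = ν' * pi1 (fun a b => g a b) x y y x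
      - pi1 (fun a b => g a b) (A x) (A y) y x := by
    rw [hR, pi2_self_eq_zero _ _ hxx hxy, pi3_self_eq_zero _ _ hxx hyy hxy hyx,
      pi4_self_eq_zero _ _ hηx hηy, pi5_self_eq_zero _ _ _ hηx hηy]
    ring
  rw [hRxy, sub_div, mul_div_cancel_right₀ _ hnd]

/-- for a nondegenerate totally real section orthogonal to ξ,
k(x,y) = ν' - π₁(Ax,Ay,y,x)/π₁(x,y,y,x). -/
theorem stmt_17 {V : Type*} [AddCommGroup V] [Module ℝ V]
    (φ : V →ₗ[ℝ] V) (ξ : V) (η : V →ₗ[ℝ] ℝ) (g : V →ₗ[ℝ] V →ₗ[ℝ] ℝ)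
    (hφ : ∀ X, φ (φ X) = -X + η X • ξ)
    (hηξ : η ξ = 1)
    (hsym : ∀ X Y, g X Y = g Y X)
    (hg : ∀ X Y, g (φ X) (φ Y) = -g X Y + η X * η Y)
    (A : V →ₗ[ℝ] V)
    (hAsym : ∀ x y, g (A x) y = g x (A y))
    (t ν' νt : ℝ)
    (R : V → V → V → V → ℝ)
    (hR : ∀ x y z u, R x y z u
      = ν' * (pi1 (fun a b => g a b) x y z u
            - pi2 (fun a b => g a b) (fun a => φ a) x y z u
            - tan t * pi5 (fun a b => g a b) (fun a => φ a) (fun a => η a) x y z u)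
      + νt * (pi3 (fun a b => g a b) (fun a => φ a) x y z u
            - tan t * pi4 (fun a b => g a b) (fun a => η a) x y z u)
      - pi1 (fun a b => g a b) (A x) (A y) z u)
    (x y : V)
    (hηx : η x = 0) (hηy : η y = 0)
    (hxx : g x (φ x) = 0) (hyy : g y (φ y) = 0) (hxy : g x (φ y) = 0)
    (hnd : pi1 (fun a b => g a b) x y y x ≠ 0) :
    R x y y x / pi1 (fun a b => g a b) x y y x
      = ν' - pi1 (fun a b => g a b) (A x) (A y) y x
              / pi1 (fun a b => g a b) x y y x :=
  stmt_17_general φ ξ η g hφ hsym hg A t ν' νt R hR x y hηx hηy hxx hyy hxy hnd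
end

section
/- The system (degenerate case dt(ξ) = 0, ξθ = ξθ* = 0) ν' = cos²t(θ² - θ*²)/(4n²) + sin t cos t·θθ*/(2n²) and ν̃' = sin t cos t(θ*² - θ²)/(4n²) + cos²t·θθ*/(2n²) has the solution θ = 2εn·√((ν'cos t - ν̃'sin t + √(ν'² + ν̃'²))/(2cos t)) and θ* = 2εn·√(cos t)·(ν'tan t + ν̃')/√(2(ν'cos t - ν̃'sin t + √(ν'² + ν̃'²))), for ε = ±1, whenever cos t > 0 and ν'cos t - ν̃'sin t + √(ν'² + ν̃'²) > 0. -/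
open Real

/-- explicit solution of the algebraic system (7) of the paper
in the case t = const with all derivative terms vanishing. -/
theorem stmt_19 (t : ℝ) (ht : t ∈ Set.Ioo (-(π / 2)) (π / 2))
    (n : ℕ) (hn : 1 ≤ n)
    (ν' νt : ℝ) (hν : (ν', νt) ≠ (0, 0))
    (ε : ℝ) (hε : ε = 1 ∨ ε = -1)
    (hcos : 0 < cos t)
    (hD : 0 < ν' * cos t - νt * sin t + Real.sqrt (ν' ^ 2 + νt ^ 2))
    (θ θs : ℝ)
    (hθ : θ = 2 * ε * (n : ℝ) *
      Real.sqrt ((ν' * cos t - νt * sin t + Real.sqrt (ν' ^ 2 + νt ^ 2)) / (2 * cos t)))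
    (hθs : θs = 2 * ε * (n : ℝ) * Real.sqrt (cos t) * (ν' * tan t + νt)
      / Real.sqrt (2 * (ν' * cos t - νt * sin t + Real.sqrt (ν' ^ 2 + νt ^ 2)))) :
    ν' = cos t ^ 2 * (θ ^ 2 - θs ^ 2) / (4 * (n : ℝ) ^ 2)
        + sin t * cos t * (θ * θs) / (2 * (n : ℝ) ^ 2) ∧
    νt = sin t * cos t * (θs ^ 2 - θ ^ 2) / (4 * (n : ℝ) ^ 2)
        + cos t ^ 2 * (θ * θs) / (2 * (n : ℝ) ^ 2) := by
  have hcne : cos t ≠ 0 := ne_of_gt hcos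
  have hnpos : (0:ℝ) < (n:ℝ) := by exact_mod_cast Nat.lt_of_lt_of_le Nat.zero_lt_one hn
  have hnne : ((n:ℝ)) ≠ 0 := ne_of_gt hnpos
  set S := Real.sqrt (ν' ^ 2 + νt ^ 2) with hSdef
  have hS2 : S ^ 2 = ν' ^ 2 + νt ^ 2 := Real.sq_sqrt (by positivity)
  clear_value S
  set D := ν' * cos t - νt * sin t + S with hDdef
  have hDne : D ≠ 0 := ne_of_gt hD
  have pyth : sin t ^ 2 + cos t ^ 2 = 1 := sin_sq_add_cos_sq t
  have hε2 : ε ^ 2 = 1 := by rcases hε with h | h <;> simp [h]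
  have hsd : Real.sqrt (D / (2 * cos t)) = Real.sqrt D / (Real.sqrt 2 * Real.sqrt (cos t)) := by
    rw [Real.sqrt_div hD.le, Real.sqrt_mul (by norm_num)]
  have h2D : Real.sqrt (2 * D) = Real.sqrt 2 * Real.sqrt D := Real.sqrt_mul (by norm_num) _
  have haD : Real.sqrt D ^ 2 = D := Real.sq_sqrt hD.le
  have hac : Real.sqrt (cos t) ^ 2 = cos t := Real.sq_sqrt hcos.le
  have ha2 : Real.sqrt 2 ^ 2 = 2 := Real.sq_sqrt (by norm_num)
  have haDpos : 0 < Real.sqrt D := Real.sqrt_pos.mpr hD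
  have hacpos : 0 < Real.sqrt (cos t) := Real.sqrt_pos.mpr hcos
  have ha2pos : (0:ℝ) < Real.sqrt 2 := Real.sqrt_pos.mpr (by norm_num)
  have htan : tan t = sin t / cos t := Real.tan_eq_sin_div_cos t
  have hθ' : θ = 2 * ε * (n : ℝ) * (Real.sqrt D / (Real.sqrt 2 * Real.sqrt (cos t))) := by
    rw [hθ, hsd]
  have hθs' : θs = 2 * ε * (n : ℝ) * Real.sqrt (cos t) *
      ((ν' * sin t + νt * cos t) / cos t) / (Real.sqrt 2 * Real.sqrt D) := by
    rw [hθs, h2D, htan]; field_simp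
  have h1 : θ ^ 2 = 2 * (n:ℝ) ^ 2 * D / cos t := by
    have e1 : θ ^ 2 = 4 * ε ^ 2 * (n:ℝ) ^ 2 *
        (Real.sqrt D ^ 2 / (Real.sqrt 2 ^ 2 * Real.sqrt (cos t) ^ 2)) := by
      rw [hθ']; ring
    rw [e1, hε2, haD, hac, ha2]; field_simp; ring
  have h2 : θs ^ 2 = 2 * (n:ℝ) ^ 2 * (ν' * sin t + νt * cos t) ^ 2 / (D * cos t) := by
    have e2 : θs ^ 2 = 4 * ε ^ 2 * (n:ℝ) ^ 2 * Real.sqrt (cos t) ^ 2 *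
        ((ν' * sin t + νt * cos t) / cos t) ^ 2 / (Real.sqrt 2 ^ 2 * Real.sqrt D ^ 2) := by
      rw [hθs']; ring
    rw [e2, hε2, haD, hac, ha2]; field_simp; ring
  have h3 : θ * θs = 2 * (n:ℝ) ^ 2 * (ν' * sin t + νt * cos t) / cos t := by
    rw [hθ', hθs']
    field_simp
    linear_combination (2*(ν'*sin t+νt*cos t))*hε2
      - ((ν'*sin t+νt*cos t))*ha2
  have key : D ^ 2 - (ν' * sin t + νt * cos t) ^ 2 = 2 * (ν' * cos t - νt * sin t) * D := by
    rw [hDdef]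
    linear_combination hS2 - (ν' ^ 2 + νt ^ 2) * pyth
  constructor
  · rw [h1, h2, h3]
    field_simp
    linear_combination (-2*cos t)*key - (4*D*ν')*pyth
  · rw [h1, h2, h3]
    field_simp
    linear_combination (2*sin t)*key - (4*D*νt)*pyth
end
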